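/- Let M be a symmetric negative definite real n×n matrix with M_{σδ} ≥ 0 for all σ ≠ δ, and suppose the graph on {1,…,n} with an edge between σ and δ whenever M_{σδ} > 0 is connected. Then all entries of -M^{-1} are strictly positive. -/

import Mathlib

/-- `M` is negative definite: symmetric part implied by `IsSymm`, and
`xᵀ M x < 0` for all nonzero `x`. -/
def NegDefMat {n : ℕ} (M : Matrix (Fin n) (Fin n) ℝ) : Prop :=
  ∀ x : Fin n → ℝ, x ≠ 0 → dotProduct x (Matrix.mulVec M x) < 0

theorem stmt_9 (n : ℕ) (M : Matrix (Fin n) (Fin n) ℝ)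
    (hsymm : M.IsSymm)
    (hneg : NegDefMat M)
    (hoff : ∀ σ δ : Fin n, σ ≠ δ → 0 ≤ M σ δ)
    (hconn : ∀ σ δ : Fin n,
      Relation.ReflTransGen (fun a b : Fin n => a ≠ b ∧ 0 < M a b) σ δ) :
    ∀ σ δ : Fin n, 0 < -(M⁻¹ σ δ) := by
  have hdet : IsUnit M.det := by
    rw [isUnit_iff_ne_zero]
    intro h
    obtain ⟨v, hv, hMv⟩ := (Matrix.exists_mulVec_eq_zero_iff).2 h
    have hlt := hneg v hv
    rw [hMv] at hlt
    simp [dotProduct] at hlt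
  have hMM : M * M⁻¹ = 1 := Matrix.mul_nonsing_inv M hdet
  intro σ δ
  set x : Fin n → ℝ := fun i => -(M⁻¹ i δ) with hxdef
  have hMx : ∀ τ, ∑ j, M τ j * x j = -(if τ = δ then (1:ℝ) else 0) := by
    intro τ
    have h1 : (M * M⁻¹) τ δ = (1 : Matrix (Fin n) (Fin n) ℝ) τ δ := by rw [hMM]
    rw [Matrix.mul_apply, Matrix.one_apply] at h1
    calc ∑ j, M τ j * x j = -∑ j, M τ j * M⁻¹ j δ := by
          rw [← Finset.sum_neg_distrib]
          exact Finset.sum_congr rfl fun j _ => by simp [hxdef, mul_neg]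
      _ = -(if τ = δ then (1:ℝ) else 0) := by rw [h1]
  -- Step 1: x is entrywise nonnegative
  have hxnonneg : ∀ i, 0 ≤ x i := by
    by_contra hc
    push_neg at hc
    obtain ⟨i0, hi0⟩ := hc
    set y : Fin n → ℝ := fun i => min (x i) 0 with hydef
    have hyne : y ≠ 0 := by
      intro h
      have h0 : y i0 = 0 := by rw [h]; rfl
      rw [hydef] at h0
      simp only [min_eq_left hi0.le] at h0
      linarith
    have hlt := hneg y hyne
    have hdq : dotProduct y (Matrix.mulVec M y) = ∑ i, ∑ j, y i * (M i j * y j) := by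
      simp [dotProduct, Matrix.mulVec, Finset.mul_sum]
    have hyle : ∀ i, y i ≤ 0 := fun i => min_le_right _ _
    have hyxle : ∀ i, y i - x i ≤ 0 := fun i => sub_nonpos.2 (min_le_left _ _)
    have term : ∀ i j, y i * (M i j * x j) ≤ y i * (M i j * y j) := by
      intro i j
      have key : 0 ≤ y i * M i j * (y j - x j) := by
        rcases eq_or_ne i j with rfl | hij
        · have h0 : y i * (y i - x i) = 0 := by
            rcases le_or_gt (x i) 0 with h | h
            · simp [hydef, min_eq_left h]
            · simp [hydef, min_eq_right h.le]
          have : y i * M i i * (y i - x i) = M i i * (y i * (y i - x i)) := by ring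
          rw [this, h0, mul_zero]
        · have h1 := hyle i
          have h2 := hyxle j
          have h3 := hoff i j hij
          nlinarith [mul_nonneg (mul_nonneg (neg_nonneg.2 h1) h3) (neg_nonneg.2 h2)]
      nlinarith [key]
    have h2 : ∑ i, ∑ j, y i * (M i j * x j) ≤ ∑ i, ∑ j, y i * (M i j * y j) :=
      Finset.sum_le_sum fun i _ => Finset.sum_le_sum fun j _ => term i j
    have h3 : ∑ i, ∑ j, y i * (M i j * x j) = -(y δ) := by
      calc ∑ i, ∑ j, y i * (M i j * x j)
          = ∑ i, y i * ∑ j, M i j * x j := by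
            exact Finset.sum_congr rfl fun i _ => (Finset.mul_sum _ _ _).symm
        _ = ∑ i, (if i = δ then -(y i) else 0) := by
            refine Finset.sum_congr rfl fun i _ => ?_
            rw [hMx i]
            by_cases h : i = δ <;> simp [h]
        _ = -(y δ) := by rw [Finset.sum_ite_eq' Finset.univ δ]; simp
    have h4 : (0:ℝ) ≤ -(y δ) := by have := hyle δ; linarith
    rw [hdq] at hlt
    linarith
  -- Step 2: zero entries propagate along edges and cannot occur at δ
  have hzero : ∀ τ, x τ = 0 → τ ≠ δ ∧ ∀ j, 0 < M τ j → x j = 0 := by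
    intro τ hτ
    have hsum := hMx τ
    have hnn : ∀ j ∈ Finset.univ, 0 ≤ M τ j * x j := by
      intro j _
      rcases eq_or_ne τ j with rfl | hj
      · rw [hτ, mul_zero]
      · exact mul_nonneg (hoff τ j hj) (hxnonneg j)
    have hτδ : τ ≠ δ := by
      intro h
      rw [if_pos h] at hsum
      have hge : (0:ℝ) ≤ ∑ j, M τ j * x j := Finset.sum_nonneg hnn
      rw [hsum] at hge; linarith
    refine ⟨hτδ, ?_⟩
    rw [if_neg hτδ, neg_zero] at hsum
    have hall := (Finset.sum_eq_zero_iff_of_nonneg hnn).1 hsum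
    intro j hMj
    have hj0 := hall j (Finset.mem_univ j)
    rcases mul_eq_zero.1 hj0 with h | h
    · linarith
    · exact h
  -- Step 3: propagate along the connectivity relation
  have hchain : ∀ a b : Fin n,
      Relation.ReflTransGen (fun a b : Fin n => a ≠ b ∧ 0 < M a b) a b →
      x a = 0 → x b = 0 := by
    intro a b h
    induction h with
    | refl => exact id
    | tail _ hbc ih => intro ha; exact (hzero _ (ih ha)).2 _ hbc.2
  have hne : x σ ≠ 0 := by
    intro h
    exact (hzero δ (hchain σ δ (hconn σ δ) h)).1 rfl
  exact lt_of_le_of_ne (hxnonneg σ) (Ne.symm hne)
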